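/- Let 0 < ε < 1/4 and n ≥ 2, and set x = (1+ε)/(n−1) and I(ε) = max{e^{−ε²/8}, √e/2}. Then for the complete graph K_n, |L(x, K_n) − ε(n−1)/(1+ε)| ≤ n·I(ε)^{n/2}/(1 − I(ε)^n). -/

import Mathlib

open Filter Topology

/-- A self-avoiding walk from `o` in the graph `G`, encoded as the (nonempty) list of
visited vertices: it starts at `o`, consecutive vertices are adjacent, and no vertex is
visited more than once.  A list of length `k+1` corresponds to a walk with `k` edges. -/
def IsSAWFrom {V : Type*} (G : SimpleGraph V) (o : V) (l : List V) : Prop :=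
  l.head? = some o ∧ l.Chain' G.Adj ∧ l.Nodup

/-- `sawCount G o k = |SAW_k(o,G)|`, the number of self-avoiding walks from `o` with
exactly `k` edges. -/
noncomputable def sawCount {V : Type*} (G : SimpleGraph V) (o : V) (k : ℕ) : ℕ :=
  Nat.card {l : List V // IsSAWFrom G o l ∧ l.length = k + 1}

/-- The partition function `Z_{o,G}(x) = Σ_k |SAW_k(o,G)| x^k`.  Since a self-avoiding
walk in a graph on `|V|` vertices has at most `|V| - 1` edges, the sum over
`k < |V|` captures all nonzero terms. -/
noncomputable def sawZ {V : Type*} [Fintype V] (G : SimpleGraph V) (o : V) (x : ℝ) : ℝ :=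
  ∑ k ∈ Finset.range (Fintype.card V), (sawCount G o k : ℝ) * x ^ k

/-- The expected length `L(x,o,G) = Z_{o,G}(x)⁻¹ Σ_k k |SAW_k(o,G)| x^k`. -/
noncomputable def sawL {V : Type*} [Fintype V] (G : SimpleGraph V) (o : V) (x : ℝ) : ℝ :=
  (sawZ G o x)⁻¹ *
    ∑ k ∈ Finset.range (Fintype.card V), (k : ℝ) * (sawCount G o k : ℝ) * x ^ k

/-- The number of pairs `(ω, ω')` of self-avoiding walks from `o`, with `k` resp. `j`
edges, whose vertex sets intersect exactly in `{o}`. -/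
noncomputable def sawPairCount {V : Type*} (G : SimpleGraph V) (o : V) (k j : ℕ) : ℕ :=
  Nat.card {p : List V × List V //
    (IsSAWFrom G o p.1 ∧ p.1.length = k + 1) ∧
    (IsSAWFrom G o p.2 ∧ p.2.length = j + 1) ∧
    {v | v ∈ p.1 ∧ v ∈ p.2} = {o}}

/-- The trivial-intersection probability
`I(x,o,G) = Z_{o,G}(x)⁻² Σ x^{|ω|+|ω'|}`, summed over pairs of self-avoiding walks
from `o` whose vertex sets meet only in `o`. -/
noncomputable def sawI {V : Type*} [Fintype V] (G : SimpleGraph V) (o : V) (x : ℝ) : ℝ :=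
  ((sawZ G o x) ^ 2)⁻¹ *
    ∑ k ∈ Finset.range (Fintype.card V), ∑ j ∈ Finset.range (Fintype.card V),
      (sawPairCount G o k j : ℝ) * x ^ (k + j)

/-- The finite-graph critical exponent `γ(x,o,G) = log Z_{o,G}(x) / log (L(x,o,G) + 1)`. -/
noncomputable def sawGamma {V : Type*} [Fintype V] (G : SimpleGraph V) (o : V) (x : ℝ) : ℝ :=
  Real.log (sawZ G o x) / Real.log (sawL G o x + 1)

/-- A graph is vertex-transitive if its automorphism group acts transitively on vertices. -/
def SimpleGraph.VertexTransitive {V : Type*} (G : SimpleGraph V) : Prop :=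
  ∀ u v : V, ∃ φ : G ≃g G, φ u = v

/-- A graph is `d`-regular: every vertex has exactly `d` neighbours. -/
def SawRegular {V : Type*} (G : SimpleGraph V) (d : ℕ) : Prop :=
  ∀ v : V, Nat.card (G.neighborSet v) = d

/-- `(x n)` is super-critical for the rooted family `(G n, o n)`:
`liminf_n Z_{o_n, G_n}(x_n) = ∞`, i.e. `Z` tends to infinity. -/
def SawSuperCritical {V : ℕ → Type*} [∀ n, Fintype (V n)]
    (G : ∀ n, SimpleGraph (V n)) (o : ∀ n, V n) (x : ℕ → ℝ) : Prop :=
  Tendsto (fun n => sawZ (G n) (o n) (x n)) atTop atTop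

/-- `(x n)` is sub-critical for the rooted family `(G n, o n)`:
`limsup_n Z_{o_n, G_n}(x_n) < ∞`, i.e. the sequence of partition functions is bounded. -/
def SawSubCritical {V : ℕ → Type*} [∀ n, Fintype (V n)]
    (G : ∀ n, SimpleGraph (V n)) (o : ∀ n, V n) (x : ℕ → ℝ) : Prop :=
  BddAbove (Set.range fun n => sawZ (G n) (o n) (x n))

/-- `(x n)` is critical: for every `0 < ε < 1`, `(x n (1+ε))` is super-critical and
`(x n (1-ε))` is sub-critical. -/
def SawCritical {V : ℕ → Type*} [∀ n, Fintype (V n)]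
    (G : ∀ n, SimpleGraph (V n)) (o : ∀ n, V n) (x : ℕ → ℝ) : Prop :=
  ∀ ε : ℝ, 0 < ε → ε < 1 →
    SawSuperCritical G o (fun n => x n * (1 + ε)) ∧
    SawSubCritical G o (fun n => x n * (1 - ε))

/-- `Z_{K_n}(x)` for the complete graph `K_n` on `n` vertices, rooted at an arbitrary
vertex (all choices agree by symmetry); junk value `0` for `n = 0`. -/
noncomputable def completeZ (n : ℕ) (x : ℝ) : ℝ :=
  if h : 0 < n then sawZ (⊤ : SimpleGraph (Fin n)) ⟨0, h⟩ x else 0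

/-- `L(x, K_n)` for the complete graph `K_n`; junk value `0` for `n = 0`. -/
noncomputable def completeL (n : ℕ) (x : ℝ) : ℝ :=
  if h : 0 < n then sawL (⊤ : SimpleGraph (Fin n)) ⟨0, h⟩ x else 0

/-- `I(x, K_n)` for the complete graph `K_n`; junk value `0` for `n = 0`. -/
noncomputable def completeI (n : ℕ) (x : ℝ) : ℝ :=
  if h : 0 < n then sawI (⊤ : SimpleGraph (Fin n)) ⟨0, h⟩ x else 0

/-- `γ(x, K_n)` for the complete graph `K_n`; junk value `0` for `n = 0`. -/
noncomputable def completeGamma (n : ℕ) (x : ℝ) : ℝ :=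
  if h : 0 < n then sawGamma (⊤ : SimpleGraph (Fin n)) ⟨0, h⟩ x else 0

/-- A non-backtracking walk in `G`, encoded as the list of visited vertices:
consecutive vertices are adjacent and `ω_{j+2} ≠ ω_j` for all `j`. -/
def IsNBWalk {V : Type*} (G : SimpleGraph V) (l : List V) : Prop :=
  l.Chain' G.Adj ∧ ∀ i, i + 2 < l.length → l[i]? ≠ l[i + 2]?

/-- The number of non-backtracking walks of length `t` from `u` to `v`. -/
noncomputable def nbCount {V : Type*} (G : SimpleGraph V) (u v : V) (t : ℕ) : ℕ :=
  Nat.card {l : List V //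
    IsNBWalk G l ∧ l.length = t + 1 ∧ l.head? = some u ∧ l.getLast? = some v}

/-- `p_t(u,v)`: the number of non-backtracking walks of length `t` from `u` to `v`
divided by `d(d-1)^{t-1}`, i.e. the probability that the non-backtracking random walk
on a `d`-regular graph started at `u` is at `v` at time `t`. -/
noncomputable def nbProb {V : Type*} (G : SimpleGraph V) (d : ℕ) (u v : V) (t : ℕ) : ℝ :=
  (nbCount G u v t : ℝ) / (d * ((d : ℝ) - 1) ^ (t - 1))

/-- The mixing time of the non-backtracking random walk on the `d`-regular graph `G`
with `N` vertices: the least `t ≥ 1` with `|p_t(u,v) - 1/N| ≤ 1/(2N)` for all `u, v`. -/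
noncomputable def nbMixingTime {V : Type*} [Fintype V] (G : SimpleGraph V) (d : ℕ) : ℕ :=
  sInf {t : ℕ | 1 ≤ t ∧ ∀ u v : V,
    |nbProb G d u v t - 1 / (Fintype.card V : ℝ)| ≤ 1 / (2 * (Fintype.card V : ℝ))}
/-!
In `K_{m+1}` the self-avoiding walks of length `k` from the root are the injective sequences of
`k` further vertices, so `Z(x) = ∑ₖ m.descFactorial k * xᵏ`. Multiplying by `x` shifts this
series by one term, because `m.descFactorial (k + 1) = (m - k) * m.descFactorial k`; this gives
the exact formula `L(x) = m - 1/x + 1/(x Z(x))`, so at `x = (1 + ε)/m` the error is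
`m / ((1 + ε) Z)`. The single term of index `⌈εm/2⌉` is a product of factors
`(m - j)(1 + ε)/m ≥ 1 + 3ε/8 ≥ exp (ε/3)`, whence `Z ≥ exp (ε²m/6)`. This beats the stated
bound, whose base `I(ε)` lies in `[exp (-ε²/8), 1)`.
-/

open Finset Real

def nodupListEquivEmbedding (β : Type*) (k : ℕ) :
    {l : List β // l.Nodup ∧ l.length = k} ≃ (Fin k ↪ β) where
  toFun l := ⟨fun i => l.1.get (Fin.cast l.2.2.symm i), fun i j hij => by
    simpa [Fin.ext_iff] using List.nodup_iff_injective_get.1 l.2.1 hij⟩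
  invFun f := ⟨List.ofFn f, List.nodup_ofFn.2 f.2, List.length_ofFn⟩
  left_inv := by
    rintro ⟨l, -, rfl⟩
    simp
  right_inv f := by
    ext i
    simp

theorem Nat.card_nodup_list (β : Type*) [Fintype β] (k : ℕ) :
    Nat.card {l : List β // l.Nodup ∧ l.length = k} = (Fintype.card β).descFactorial k := by
  rw [Nat.card_congr (nodupListEquivEmbedding β k), Nat.card_eq_fintype_card,
    Fintype.card_embedding_eq, Fintype.card_fin]

theorem isSAWFrom_top_iff {V : Type*} {o : V} {l : List V} :
    IsSAWFrom (⊤ : SimpleGraph V) o l ↔ l.head? = some o ∧ l.Nodup :=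
  ⟨fun h => ⟨h.1, h.2.2⟩, fun h => ⟨h.1, (h.2.imp fun hne => hne).isChain, h.2⟩⟩

noncomputable def sawTopEquiv {V : Type*} (o : V) (k : ℕ) :
    {t : List {x // x ≠ o} // t.Nodup ∧ t.length = k} ≃
      {l : List V // IsSAWFrom (⊤ : SimpleGraph V) o l ∧ l.length = k + 1} :=
  Equiv.ofBijective
    (fun t => ⟨o :: t.1.map Subtype.val, isSAWFrom_top_iff.2 ⟨rfl, List.nodup_cons.2
      ⟨fun h => by obtain ⟨x, -, hx⟩ := List.mem_map.1 h; exact x.2 hx,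
        t.2.1.map Subtype.val_injective⟩⟩, by simp [t.2.2]⟩)
    ⟨fun t s h => Subtype.ext <| List.map_injective_iff.2 Subtype.val_injective <|
        (List.cons.inj (congrArg Subtype.val h)).2, by
      rintro ⟨_ | ⟨a, t⟩, hsaw, hlen⟩
      · simp [IsSAWFrom] at hsaw
      · obtain ⟨ha, hnodup⟩ := isSAWFrom_top_iff.1 hsaw
        obtain rfl : a = o := by simpa using ha
        rw [List.nodup_cons] at hnodup
        lift t to List {x // x ≠ a} using fun x hx h => hnodup.1 (h ▸ hx)
        exact ⟨⟨t, hnodup.2.of_map _, by simpa using hlen⟩, rfl⟩⟩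

theorem sawCount_top {V : Type*} [Fintype V] (o : V) (k : ℕ) :
    sawCount (⊤ : SimpleGraph V) o k = (Fintype.card V - 1).descFactorial k := by
  classical
  rw [sawCount, ← Nat.card_congr (sawTopEquiv o k), Nat.card_nodup_list,
    Fintype.card_subtype_compl, Fintype.card_subtype_eq]

noncomputable def descFactorialSeries (m : ℕ) (x : ℝ) : ℝ :=
  ∑ k ∈ range (m + 1), (m.descFactorial k : ℝ) * x ^ k

theorem one_le_descFactorialSeries (m : ℕ) {x : ℝ} (hx : 0 ≤ x) :
    1 ≤ descFactorialSeries m x := by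
  exact le_trans (by simp) (single_le_sum (f := fun k => (m.descFactorial k : ℝ) * x ^ k)
    (fun _ _ => by positivity) (mem_range.2 m.succ_pos))

theorem mul_sum_sub_mul_descFactorial_mul_pow (m : ℕ) (x : ℝ) :
    x * ∑ k ∈ range (m + 1), ((m : ℝ) - k) * m.descFactorial k * x ^ k =
      descFactorialSeries m x - 1 := by
  have hshift : ∀ k ∈ range (m + 1), x * (((m : ℝ) - k) * m.descFactorial k * x ^ k) =
      (m.descFactorial (k + 1) : ℝ) * x ^ (k + 1) := by
    intro k hk
    rw [Nat.descFactorial_succ, Nat.cast_mul, Nat.cast_sub (Nat.lt_succ_iff.1 (mem_range.1 hk))]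
    ring
  rw [mul_sum, sum_congr rfl hshift, descFactorialSeries,
    ← add_sub_cancel_right (∑ k ∈ range (m + 1), _) (1 : ℝ)]
  congr 1
  simpa [Nat.descFactorial_of_lt (Nat.lt_succ_self m)] using
    (sum_range_succ' (fun k => (m.descFactorial k : ℝ) * x ^ k) (m + 1)).symm.trans
      (sum_range_succ _ (m + 1))

theorem sawZ_top {V : Type*} [Fintype V] {m : ℕ} (hm : Fintype.card V = m + 1) (o : V)
    (x : ℝ) : sawZ (⊤ : SimpleGraph V) o x = descFactorialSeries m x := by
  simp only [sawZ, descFactorialSeries, sawCount_top, hm, Nat.add_sub_cancel]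

theorem sawL_top {V : Type*} [Fintype V] {m : ℕ} (hm : Fintype.card V = m + 1) (o : V)
    {x : ℝ} (hx : 0 < x) :
    sawL (⊤ : SimpleGraph V) o x = m - x⁻¹ + (x * descFactorialSeries m x)⁻¹ := by
  have hZ : 1 ≤ descFactorialSeries m x := one_le_descFactorialSeries m hx.le
  rw [sawL, sawZ_top hm]
  simp only [sawCount_top, hm, Nat.add_sub_cancel]
  set N := ∑ k ∈ range (m + 1), (k : ℝ) * m.descFactorial k * x ^ k
  have hN : x * (m * descFactorialSeries m x - N) = descFactorialSeries m x - 1 := by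
    rw [← mul_sum_sub_mul_descFactorial_mul_pow, descFactorialSeries, mul_sum,
      ← sum_sub_distrib]
    congr 1
    exact sum_congr rfl fun _ _ => by ring
  field_simp
  linear_combination -hN

theorem completeL_succ (m : ℕ) {x : ℝ} (hx : 0 < x) :
    completeL (m + 1) x = m - x⁻¹ + (x * descFactorialSeries m x)⁻¹ := by
  rw [completeL, dif_pos m.succ_pos, sawL_top (Fintype.card_fin _) _ hx]

theorem pow_le_descFactorial_mul_pow {m k : ℕ} {c x : ℝ} (hc : 0 ≤ c) (hk : k ≤ m)
    (h : ∀ j < k, c ≤ ((m : ℝ) - j) * x) : c ^ k ≤ m.descFactorial k * x ^ k := by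
  calc c ^ k = ∏ _j ∈ range k, c := by rw [prod_const, card_range]
    _ ≤ ∏ j ∈ range k, ((m - j : ℕ) : ℝ) * x := prod_le_prod (fun _ _ => hc) fun j hj => by
        rw [Nat.cast_sub (by grind)]
        exact h j (mem_range.1 hj)
    _ = m.descFactorial k * x ^ k := by
        rw [prod_mul_distrib, prod_const, card_range, Nat.descFactorial_eq_prod_range,
          Nat.cast_prod]

theorem exp_div_three_le {ε : ℝ} (hε0 : 0 ≤ ε) (hε : ε ≤ 1 / 3) :
    exp (ε / 3) ≤ 1 + 3 * ε / 8 := by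
  refine (exp_bound_div_one_sub_of_interval (by positivity) (by linarith)).trans ?_
  rw [div_le_iff₀ (by linarith)]
  nlinarith

theorem exp_le_descFactorialSeries {m : ℕ} {ε : ℝ} (hε0 : 0 ≤ ε) (hε : ε ≤ 1 / 4) :
    exp (ε ^ 2 * m / 6) ≤ descFactorialSeries m ((1 + ε) / m) := by
  set k := ⌈ε * m / 2⌉₊
  have hkm : k ≤ m := Nat.ceil_le.2 (by nlinarith [(Nat.cast_nonneg m : (0 : ℝ) ≤ m)])
  have hfactor : ∀ j < k, 1 + 3 * ε / 8 ≤ ((m : ℝ) - j) * ((1 + ε) / m) := by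
    intro j hj
    have hjε : (j : ℝ) < ε * m / 2 := Nat.lt_ceil.1 hj
    have hm : (0 : ℝ) < m := by
      by_contra! h
      nlinarith [(Nat.cast_nonneg j : (0 : ℝ) ≤ j)]
    rw [mul_div_assoc', le_div_iff₀ hm]
    nlinarith [mul_lt_mul_of_pos_right hjε (by linarith : (0 : ℝ) < 1 + ε)]
  calc exp (ε ^ 2 * m / 6) ≤ exp (ε / 3) ^ k := by
        rw [← exp_nat_mul]
        gcongr
        nlinarith [Nat.le_ceil (ε * m / 2)]
    _ ≤ (1 + 3 * ε / 8) ^ k := by gcongr; exact exp_div_three_le hε0 (by linarith)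
    _ ≤ m.descFactorial k * ((1 + ε) / m) ^ k :=
        pow_le_descFactorial_mul_pow (by positivity) hkm hfactor
    _ ≤ descFactorialSeries m ((1 + ε) / m) :=
        single_le_sum (f := fun k => (m.descFactorial k : ℝ) * ((1 + ε) / m) ^ k)
          (fun _ _ => by positivity) (mem_range.2 (by omega))

/-- For `0 < ε < 1/4`, `n ≥ 2`, `x = (1+ε)/(n−1)` and
`I(ε) = max(e^{−ε²/8}, √e/2)`, the complete graph `K_n` satisfies
`|L(x, K_n) − ε(n−1)/(1+ε)| ≤ n·I(ε)^{n/2}/(1 − I(ε)^n)`. -/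
theorem complete_superCritical_length_estimate (ε : ℝ) (hε0 : 0 < ε) (hε : ε < 1 / 4)
    (n : ℕ) (hn : 2 ≤ n) :
    |completeL n ((1 + ε) / ((n : ℝ) - 1)) - ε * ((n : ℝ) - 1) / (1 + ε)| ≤
      (n : ℝ) * max (Real.exp (-ε ^ 2 / 8)) (Real.sqrt (Real.exp 1) / 2) ^ ((n : ℝ) / 2) /
        (1 - max (Real.exp (-ε ^ 2 / 8)) (Real.sqrt (Real.exp 1) / 2) ^ n) := by
  obtain ⟨m, rfl⟩ : ∃ m, n = m + 1 := ⟨n - 1, by omega⟩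
  have hm : (1 : ℝ) ≤ m := by exact_mod_cast (by omega : 1 ≤ m)
  set I := max (exp (-ε ^ 2 / 8)) (√(exp 1) / 2)
  have hI0 : 0 ≤ I := le_max_of_le_left (exp_pos _).le
  have hI1 : I < 1 := max_lt (exp_lt_one_iff.2 (by nlinarith))
    (by linarith [sqrt_lt' two_pos |>.2 (exp_one_lt_d9.trans (by norm_num))])
  have hS := exp_le_descFactorialSeries (m := m) hε0.le hε.le
  set S := descFactorialSeries m ((1 + ε) / m) with hSdef
  have hS0 : 0 < S := (exp_pos _).trans_le hS
  have hL : completeL (m + 1) ((1 + ε) / m) - ε * m / (1 + ε) = m / ((1 + ε) * S) := by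
    rw [completeL_succ m (div_pos (by linarith) (by linarith)), ← hSdef]
    field_simp
    ring
  push_cast
  rw [add_sub_cancel_right, hL, abs_of_nonneg (by positivity)]
  calc (m : ℝ) / ((1 + ε) * S) ≤ m / exp (ε ^ 2 * m / 6) := by
        gcongr
        nlinarith [exp_pos (ε ^ 2 * m / 6)]
    _ ≤ (m + 1) * exp (-ε ^ 2 / 8) ^ (((m : ℝ) + 1) / 2) := by
        rw [← exp_mul, div_eq_mul_inv, ← exp_neg]
        gcongr
        · linarith
        · nlinarith
    _ ≤ (m + 1) * I ^ (((m : ℝ) + 1) / 2) := by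
        gcongr
        exact le_max_left _ _
    _ ≤ (m + 1) * I ^ (((m : ℝ) + 1) / 2) / (1 - I ^ (m + 1)) :=
        le_div_self (by positivity) (sub_pos.2 (pow_lt_one₀ hI0 hI1 m.succ_ne_zero))
          (sub_le_self _ (by positivity))
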